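/- arXiv:1510.02521 — 2 statements merged into one kernel-verified Lean document; each statement's English description precedes it below -/
import Mathlib

section
/- Let n ≥ 3 and let L be the circulant Latin square of order n. For every i ∈ ZMod n, the subgraph of the Latin square graph Γ(L) induced on the union of right diagonals T_i ∪ T_{i+1}, where T_j = {(r, r + j) : r ∈ ZMod n}, is isomorphic to the Möbius ladder of order 2n. -/
/-- The Latin square graph of the circulant Latin square of order `n` (the Cayley table of
`ZMod n`, with symbol `r + c` in cell `(r, c)`). -/
def circGraph (n : ℕ) : SimpleGraph (ZMod n × ZMod n) where
  Adj x y := x ≠ y ∧ (x.1 = y.1 ∨ x.2 = y.2 ∨ x.1 + x.2 = y.1 + y.2)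
  symm := by
    constructor
    rintro x y ⟨hne, h⟩
    refine ⟨hne.symm, ?_⟩
    rcases h with h | h | h
    · exact Or.inl h.symm
    · exact Or.inr (Or.inl h.symm)
    · exact Or.inr (Or.inr h.symm)
  loopless := by constructor; rintro x ⟨hne, -⟩; exact hne rfl

/-- The Möbius ladder of order `2n`: the graph on `ZMod (2n)` where distinct vertices `x, y`
are adjacent iff `y - x ∈ {1, -1, n}`. -/
def mobiusLadder (n : ℕ) : SimpleGraph (ZMod (2 * n)) where
  Adj x y := x ≠ y ∧ (y - x = 1 ∨ y - x = -1 ∨ y - x = (n : ZMod (2 * n)))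
  symm := by
    have hn : (n : ZMod (2 * n)) + (n : ZMod (2 * n)) = 0 := by
      have h := ZMod.natCast_self (2 * n)
      push_cast at h
      linear_combination h
    constructor
    rintro x y ⟨hne, h⟩
    refine ⟨hne.symm, ?_⟩
    have hsub : x - y = -(y - x) := by ring
    rcases h with h | h | h
    · exact Or.inr (Or.inl (by rw [hsub, h]))
    · exact Or.inl (by rw [hsub, h, neg_neg])
    · exact Or.inr (Or.inr (by rw [hsub, h, neg_eq_of_add_eq_zero_left hn]))
  loopless := by constructor; rintro x ⟨hne, -⟩; exact hne rfl

theorem ZMod.natCast_eq_natCast_iff_of_lt_two_mul {m a b : ℕ} (ha : a < 2 * m)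
    (hb : b < 2 * m) : (a : ZMod m) = b ↔ a = b ∨ a = b + m ∨ b = a + m := by
  rw [← Int.cast_natCast a, ← Int.cast_natCast b, ZMod.intCast_eq_intCast_iff_dvd_sub]
  constructor
  · rintro ⟨k, hk⟩
    have hk₁ : -2 < k := by nlinarith
    have hk₂ : k < 2 := by nlinarith
    interval_cases k <;> omega
  · rintro (rfl | rfl | rfl) <;> push_cast <;> simp

theorem natCast_sub_natCast_eq_natCast_iff {R : Type*} [CommRing R] (a b c : ℕ) :
    (a : R) - b = c ↔ (a : R) = (b + c : ℕ) := by
  rw [sub_eq_iff_eq_add, Nat.cast_add, add_comm]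

theorem natCast_sub_natCast_eq_neg_one_iff {R : Type*} [CommRing R] (a b : ℕ) :
    (a : R) - b = -1 ↔ ((a + 1 : ℕ) : R) = b := by
  rw [Nat.cast_add, Nat.cast_one]
  constructor <;> intro h <;> linear_combination h

/-- `T_i ∪ T_{i+1}`. -/
def diagonalPair (n : ℕ) (i : ZMod n) : Set (ZMod n × ZMod n) :=
  {p | ∃ r : ZMod n, p = (r, r + i)} ∪ {p | ∃ r : ZMod n, p = (r, r + i + 1)}

/-- Vertex `u` of the ladder is placed in row `⌊u/2⌋`, on `T_i` for even `u` and on `T_{i+1}`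
for odd `u`: consecutive vertices then alternately share a row and a column, and the cells of
`u` and `u + n` carry the same symbol `u + i`. -/
def ladderCell (n : ℕ) (i : ZMod n) (u : ℕ) : ZMod n × ZMod n :=
  (((u / 2 : ℕ) : ZMod n), (((u + 1) / 2 : ℕ) : ZMod n) + i)

section ladderCell

variable {n : ℕ} {i : ZMod n}

theorem ladderCell_fst_add_snd (u : ℕ) :
    (ladderCell n i u).1 + (ladderCell n i u).2 = (u : ZMod n) + i := by
  have hu : u / 2 + (u + 1) / 2 = u := by omega
  rw [ladderCell, ← add_assoc, ← Nat.cast_add, hu]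

theorem ladderCell_mem_diagonalPair (u : ℕ) : ladderCell n i u ∈ diagonalPair n i := by
  rcases (by omega : (u + 1) / 2 = u / 2 ∨ (u + 1) / 2 = u / 2 + 1) with h | h
  · exact Or.inl ⟨(u / 2 : ℕ), by rw [ladderCell, h]⟩
  · exact Or.inr ⟨(u / 2 : ℕ), by rw [ladderCell, h, Nat.cast_succ]; ring_nf⟩

theorem exists_ladderCell_eq [NeZero n] {p : ZMod n × ZMod n} (hp : p ∈ diagonalPair n i) :
    ∃ u < 2 * n, ladderCell n i u = p := by
  rcases hp with ⟨r, rfl⟩ | ⟨r, rfl⟩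
  · refine ⟨2 * r.val, by linarith [r.val_lt], ?_⟩
    rw [ladderCell, show 2 * r.val / 2 = r.val by omega,
      show (2 * r.val + 1) / 2 = r.val by omega, ZMod.natCast_zmod_val]
  · refine ⟨2 * r.val + 1, by linarith [r.val_lt], ?_⟩
    rw [ladderCell, show (2 * r.val + 1) / 2 = r.val by omega,
      show (2 * r.val + 1 + 1) / 2 = r.val + 1 by omega, Nat.cast_succ, ZMod.natCast_zmod_val]
    ring_nf

theorem ladderCell_inj (hn : 2 ≤ n) {u v : ℕ} (hu : u < 2 * n) (hv : v < 2 * n) :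
    ladderCell n i u = ladderCell n i v ↔ u = v := by
  refine ⟨fun h => ?_, congrArg _⟩
  rw [ladderCell, ladderCell, Prod.mk.injEq, add_left_inj,
    ZMod.natCast_eq_natCast_iff_of_lt_two_mul (by omega) (by omega),
    ZMod.natCast_eq_natCast_iff_of_lt_two_mul (by omega) (by omega)] at h
  omega

theorem circGraph_adj_ladderCell_iff (hn : 2 ≤ n) {u v : ℕ} (hu : u < 2 * n) (hv : v < 2 * n) :
    (circGraph n).Adj (ladderCell n i u) (ladderCell n i v) ↔
      (mobiusLadder n).Adj (u : ZMod (2 * n)) v := by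
  simp only [circGraph, mobiusLadder, ne_eq, ladderCell_inj hn hu hv, ladderCell_fst_add_snd,
    add_left_inj]
  simp only [ladderCell, add_left_inj]
  rw [natCast_sub_natCast_eq_neg_one_iff, ← Nat.cast_one (R := ZMod (2 * n)),
    natCast_sub_natCast_eq_natCast_iff, natCast_sub_natCast_eq_natCast_iff]
  simp (disch := omega) only [ZMod.natCast_eq_natCast_iff_of_lt_two_mul]
  omega

end ladderCell

noncomputable def mobiusLadderIsoInduceDiagonalPair {n : ℕ} (hn : 2 ≤ n) (i : ZMod n) :
    mobiusLadder n ≃g (circGraph n).induce (diagonalPair n i) :=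
  haveI : NeZero n := ⟨by omega⟩
  haveI : NeZero (2 * n) := ⟨by omega⟩
  { toEquiv := Equiv.ofBijective
      (fun x => ⟨ladderCell n i x.val, ladderCell_mem_diagonalPair x.val⟩)
      ⟨fun x y h => ZMod.val_injective _
          ((ladderCell_inj hn x.val_lt y.val_lt).1 (congrArg Subtype.val h)),
        fun ⟨_, hp⟩ =>
          let ⟨u, hu, hup⟩ := exists_ladderCell_eq hp
          ⟨u, Subtype.ext (by simp only [ZMod.val_cast_of_lt hu, hup])⟩⟩
    map_rel_iff' := fun {x y} =>
      (circGraph_adj_ladderCell_iff hn x.val_lt y.val_lt).trans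
        (by rw [ZMod.natCast_zmod_val, ZMod.natCast_zmod_val]) }

/-- For the circulant Latin square of order `n ≥ 3`, the subgraph induced by the union of
two consecutive right diagonals `T_i ∪ T_{i+1}` is isomorphic to the Möbius ladder of
order `2n`. -/
theorem stmt_16 (n : ℕ) (hn : 3 ≤ n) (i : ZMod n) :
    Nonempty
      (((circGraph n).induce
          ({p | ∃ r : ZMod n, p = (r, r + i)} ∪ {p | ∃ r : ZMod n, p = (r, r + i + 1)} :
            Set (ZMod n × ZMod n))) ≃g
        mobiusLadder n) :=
  ⟨(mobiusLadderIsoInduceDiagonalPair (by omega) i).symm⟩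
end

section
/- Every Latin square L of even order n ≥ 2 with χ(L) ≤ n + 2 contains a partial transversal of length n − 1. -/
/-- The Latin square graph of `L : Fin n → Fin n → Fin n`: vertices are cells, and two
distinct cells are adjacent iff they share a row, a column, or a symbol. -/
def latinGraph (n : ℕ) (L : Fin n → Fin n → Fin n) : SimpleGraph (Fin n × Fin n) where
  Adj x y := x ≠ y ∧ (x.1 = y.1 ∨ x.2 = y.2 ∨ L x.1 x.2 = L y.1 y.2)
  symm := by
    refine ⟨?_⟩
    rintro x y ⟨hne, h⟩
    refine ⟨hne.symm, ?_⟩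
    rcases h with h | h | h
    · exact Or.inl h.symm
    · exact Or.inr (Or.inl h.symm)
    · exact Or.inr (Or.inr h.symm)
  loopless := by refine ⟨?_⟩; rintro x ⟨hne, -⟩; exact hne rfl

/-!
Pigeonhole: `Γ(L)` has `n²` vertices, so an `(n + 2)`-colouring has a colour class with more
than `n - 2` of them, as `(n + 2)(n - 2) = n² - 4 < n²`; a colour class is an independent set,
i.e. a partial transversal.
-/

namespace SimpleGraph

theorem Colorable.exists_isNIndepSet_of_mul_lt_card {V : Type*} [Fintype V] {G : SimpleGraph V}
    {k m : ℕ} (hG : G.Colorable k) (h : k * m < Fintype.card V) : ∃ s, G.IsNIndepSet (m + 1) s := by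
  classical
  obtain ⟨C⟩ := hG
  obtain ⟨c, -, hc⟩ := Finset.exists_lt_card_fiber_of_mul_lt_card_of_maps_to
    (s := Finset.univ) (t := Finset.univ) (f := C) (fun _ _ => Finset.mem_univ _)
    (by simpa using h)
  obtain ⟨s, hs, hcard⟩ := Finset.exists_subset_card_eq (Nat.succ_le_of_lt hc)
  refine ⟨s, ?_, hcard⟩
  refine (C.isIndepSet_colorClass c).mono fun v hv => ?_
  exact (Finset.mem_filter.mp (hs hv)).2

end SimpleGraph

theorem stmt_19_general (n : ℕ) (hn : 2 ≤ n) (L : Fin n → Fin n → Fin n)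
    (hchi : (latinGraph n L).chromaticNumber ≤ (n : ℕ∞) + 2) :
    ∃ T : Finset (Fin n × Fin n),
      (∀ p ∈ T, ∀ q ∈ T, ¬ (latinGraph n L).Adj p q) ∧ T.card = n - 1 := by
  have hcolorable : (latinGraph n L).Colorable (n + 2) :=
    SimpleGraph.chromaticNumber_le_iff_colorable.mp (by exact_mod_cast hchi)
  have hcount : (n + 2) * (n - 2) < Fintype.card (Fin n × Fin n) := by
    obtain ⟨m, rfl⟩ := Nat.exists_eq_add_of_le hn
    simp only [Fintype.card_prod, Fintype.card_fin, Nat.add_sub_cancel_left]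
    nlinarith
  obtain ⟨T, hT⟩ := hcolorable.exists_isNIndepSet_of_mul_lt_card hcount
  exact ⟨T, fun p hp q hq hadj => hT.isIndepSet hp hq hadj.ne hadj, by rw [hT.card_eq]; omega⟩

/-- Every Latin square of even order `n ≥ 2` with `χ(L) ≤ n + 2` contains a partial
transversal of length `n - 1`. -/
theorem stmt_19 (n : ℕ) (hn : 2 ≤ n) (heven : Even n) (L : Fin n → Fin n → Fin n)
    (hrow : ∀ r, Function.Bijective (L r))
    (hcol : ∀ c, Function.Bijective fun r => L r c)
    (hchi : (latinGraph n L).chromaticNumber ≤ (n : ℕ∞) + 2) :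
    ∃ T : Finset (Fin n × Fin n),
      (∀ p ∈ T, ∀ q ∈ T, ¬ (latinGraph n L).Adj p q) ∧ T.card = n - 1 :=
  stmt_19_general n hn L hchi
end
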